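/- Let L be a 3-dimensional antisymmetric ℤ_p-algebra. The following are equivalent: (1) the submodule [L,L] has rank 3; (2) every term δ_i(L) of the derived series has rank 3; (3) L is unsolvable (δ_i(L) ≠ 0 for all i); (4) the matrix of L with respect to some basis has nonzero determinant; (5) the matrix of L with respect to every basis has nonzero determinant. -/

import Mathlib

/-- The submodule generated by all brackets `f a b` with `a ∈ S`, `b ∈ T`. -/
noncomputable def bracketSub {p : ℕ} [Fact p.Prime] {L : Type*} [AddCommGroup L] [Module ℤ_[p] L]
    (f : L →ₗ[ℤ_[p]] L →ₗ[ℤ_[p]] L) (S T : Submodule ℤ_[p] L) : Submodule ℤ_[p] L :=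
  Submodule.span ℤ_[p] {z | ∃ a ∈ S, ∃ b ∈ T, z = f a b}

/-- The derived series `δ_0(L) = L`, `δ_{i+1}(L) = [δ_i(L), δ_i(L)]`. -/
noncomputable def derivedSer {p : ℕ} [Fact p.Prime] {L : Type*} [AddCommGroup L] [Module ℤ_[p] L]
    (f : L →ₗ[ℤ_[p]] L →ₗ[ℤ_[p]] L) : ℕ → Submodule ℤ_[p] L
  | 0 => ⊤
  | n + 1 => bracketSub f (derivedSer f n) (derivedSer f n)

/-- `A` is the matrix of the bracket `f` with respect to the basis `b`. -/
def MatrixOf {p : ℕ} [Fact p.Prime] {L : Type*} [AddCommGroup L] [Module ℤ_[p] L]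
    (f : L →ₗ[ℤ_[p]] L →ₗ[ℤ_[p]] L) (b : Module.Basis (Fin 3) ℤ_[p] L)
    (A : Matrix (Fin 3) (Fin 3) ℤ_[p]) : Prop :=
  f (b 1) (b 2) = ∑ i : Fin 3, A i 0 • b i ∧
  f (b 2) (b 0) = ∑ i : Fin 3, A i 1 • b i ∧
  f (b 0) (b 1) = ∑ i : Fin 3, A i 2 • b i

/-!
Write `c₀ = [x₁, x₂]`, `c₁ = [x₂, x₀]`, `c₂ = [x₀, x₁]`. These span `[L, L]` and their coordinates
are the columns of the matrix of `L`, so a nonzero determinant (for one basis or for all) amounts to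
`[L, L]` having rank 3.

A submodule `M ≤ L` has rank 3 iff `a • L ⊆ M` for some `a ≠ 0` (the quotient is torsion). If
`a • L ⊆ δᵢ` and `d • L ⊆ δ₁ = [L, L]`, then `(a² d) • L ⊆ [a • L, a • L] ⊆ δᵢ₊₁`, so rank 3 propagates
along the derived series.

Conversely, a relation `∑ gⱼ cⱼ = 0` with `g_k ≠ 0` puts `g_k • δ₁` inside the span of two vectors
`x, y`, hence `g_k² • δ₂ ⊆ ℤ_p ∙ [x, y]`; since the bracket vanishes on a line, `g_k⁴ • δ₃ = 0`,
and `δ₃ = 0` as `L` is torsion-free.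
-/

open Module Submodule

theorem Submodule.finrank_eq_finrank_iff_exists_smul_mem {R M : Type*} [CommRing R] [IsDomain R]
    [AddCommGroup M] [Module R M] [Module.Finite R M] (N : Submodule R M) :
    finrank R N = finrank R M ↔ ∃ a : R, a ≠ 0 ∧ ∀ x, a • x ∈ N := by
  rw [← N.finrank_quotient_add_finrank, right_eq_add, finrank_eq_zero_iff_isTorsion]
  constructor
  · intro htors
    obtain ⟨a, ha, ha0⟩ := annihilator_top_inter_nonZeroDivisors htors
    refine ⟨a, nonZeroDivisors.ne_zero ha0, fun x => ?_⟩
    rw [← Quotient.mk_eq_zero, Quotient.mk_smul]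
    exact mem_annihilator.mp ha _ mem_top
  · rintro ⟨a, ha, hN⟩ x
    induction x using Quotient.induction_on with
    | H x =>
      refine ⟨⟨a, mem_nonZeroDivisors_of_ne_zero ha⟩, ?_⟩
      rw [Submonoid.smul_def, ← Quotient.mk_smul, Quotient.mk_eq_zero]
      exact hN x

theorem smul_mem_span_pair_of_sum_eq_zero {R M : Type*} [CommRing R] [AddCommGroup M]
    [Module R M] (c : Fin 3 → M) (g : Fin 3 → R) (h : ∑ i, g i • c i = 0) (k : Fin 3) :
    ∀ u ∈ span R (Set.range c), g k • u ∈ span R {c (k + 1), c (k + 2)} := by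
  set P := span R {c (k + 1), c (k + 2)}
  have h1 : c (k + 1) ∈ P := subset_span (by simp)
  have h2 : c (k + 2) ∈ P := subset_span (by simp)
  have hk : g k • c k = -(g (k + 1) • c (k + 1) + g (k + 2) • c (k + 2)) := by
    rw [eq_neg_iff_add_eq_zero, ← h]
    fin_cases k <;> simp [Fin.sum_univ_three] <;> abel
  have hc : ∀ j, g k • c j ∈ P := by
    have hj : ∀ i l : Fin 3, i = l ∨ i = l + 1 ∨ i = l + 2 := by decide
    intro j
    rcases hj j k with rfl | rfl | rfl
    · rw [hk]
      exact P.neg_mem (P.add_mem (P.smul_mem _ h1) (P.smul_mem _ h2))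
    · exact P.smul_mem _ h1
    · exact P.smul_mem _ h2
  have hle : span R (Set.range c) ≤ P.comap (LinearMap.lsmul R M (g k)) :=
    span_le.2 (Set.range_subset_iff.2 hc)
  exact fun u hu => hle hu

def cyclicBrackets {R M N : Type*} [CommRing R] [AddCommGroup M] [Module R M] [AddCommGroup N]
    [Module R N] (f : M →ₗ[R] M →ₗ[R] N) (v : Fin 3 → M) : Fin 3 → N :=
  ![f (v 1) (v 2), f (v 2) (v 0), f (v 0) (v 1)]

section Bracket

variable {p : ℕ} [Fact p.Prime] {L : Type*} [AddCommGroup L] [Module ℤ_[p] L]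
  (f : L →ₗ[ℤ_[p]] L →ₗ[ℤ_[p]] L)

theorem bracketSub_eq_map₂ (S T : Submodule ℤ_[p] L) : bracketSub f S T = map₂ f S T := by
  rw [map₂_eq_span_image2, bracketSub]
  congr 1
  ext z
  simp [Set.image2, eq_comm]

theorem smul_mem_bracketSub {S T S' T' : Submodule ℤ_[p] L} {a : ℤ_[p]}
    (hS : ∀ u ∈ S, a • u ∈ S') (hT : ∀ v ∈ T, a • v ∈ T') {z : L} (hz : z ∈ bracketSub f S T) :
    (a * a) • z ∈ bracketSub f S' T' := by
  rw [bracketSub_eq_map₂] at hz ⊢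
  have hle : map₂ f S T ≤ (map₂ f S' T').comap (LinearMap.lsmul ℤ_[p] L (a * a)) :=
    map₂_le.2 fun u hu v hv => by
      simpa [smul_smul] using apply_mem_map₂ f (hS u hu) (hT v hv)
  exact hle hz

theorem bracketSub_span_pair_le (hf : f.IsAlt) (x y : L) :
    bracketSub f (span ℤ_[p] {x, y}) (span ℤ_[p] {x, y}) ≤ ℤ_[p] ∙ f x y := by
  rw [bracketSub_eq_map₂, map₂_span_span, span_le]
  rintro _ ⟨u, hu, v, hv, rfl⟩
  have hxy : f x y ∈ ℤ_[p] ∙ f x y := mem_span_singleton_self _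
  rw [Set.mem_insert_iff, Set.mem_singleton_iff] at hu hv
  rcases hu with hu | hu <;> rcases hv with hv | hv <;> simp only [hu, hv]
  · rw [hf.self_eq_zero]
    exact zero_mem _
  · exact hxy
  · rw [← hf.neg x y]
    exact neg_mem hxy
  · rw [hf.self_eq_zero]
    exact zero_mem _

theorem bracketSub_span_singleton_eq_bot (hf : f.IsAlt) (w : L) :
    bracketSub f (ℤ_[p] ∙ w) (ℤ_[p] ∙ w) = ⊥ := by
  rw [bracketSub_eq_map₂, map₂_span_span]
  simp [hf.self_eq_zero]

theorem exists_smul_mem_derivedSer {d : ℤ_[p]} (hd : d ≠ 0) (h1 : ∀ x, d • x ∈ derivedSer f 1) :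
    ∀ n, ∃ a : ℤ_[p], a ≠ 0 ∧ ∀ x, a • x ∈ derivedSer f n
  | 0 => ⟨1, one_ne_zero, fun _ => mem_top⟩
  | n + 1 => by
    obtain ⟨a, ha, hn⟩ := exists_smul_mem_derivedSer hd h1 n
    -- `(a * a * d) • x ∈ (a * a) • [L, L] ⊆ [a • L, a • L] ⊆ δ_{n+1}`
    exact ⟨a * a * d, mul_ne_zero (mul_ne_zero ha ha) hd, fun x => by
      rw [mul_smul]
      exact smul_mem_bracketSub f (fun u _ => hn u) (fun v _ => hn v) (h1 x)⟩

theorem finrank_derivedSer_eq_of_finrank_derivedSer_one_eq [Module.Finite ℤ_[p] L]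
    (h1 : finrank ℤ_[p] (derivedSer f 1) = finrank ℤ_[p] L) (n : ℕ) :
    finrank ℤ_[p] (derivedSer f n) = finrank ℤ_[p] L := by
  obtain ⟨d, hd, hd1⟩ := (finrank_eq_finrank_iff_exists_smul_mem _).1 h1
  exact (finrank_eq_finrank_iff_exists_smul_mem _).2 (exists_smul_mem_derivedSer f hd hd1 n)

theorem derivedSer_one_eq_span_cyclicBrackets (hf : f.IsAlt) (b : Basis (Fin 3) ℤ_[p] L) :
    derivedSer f 1 = span ℤ_[p] (Set.range (cyclicBrackets f b)) := by
  change bracketSub f ⊤ ⊤ = _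
  rw [bracketSub_eq_map₂, ← b.span_eq, map₂_span_span]
  apply le_antisymm
  · rw [span_le]
    rintro _ ⟨_, ⟨i, rfl⟩, _, ⟨j, rfl⟩, rfl⟩
    have hc : ∀ k, cyclicBrackets f b k ∈ span ℤ_[p] (Set.range (cyclicBrackets f b)) :=
      fun k => subset_span ⟨k, rfl⟩
    fin_cases i <;> fin_cases j <;> dsimp only
    all_goals first
      | (rw [hf.self_eq_zero]; exact zero_mem _)
      | exact hc 0 | exact hc 1 | exact hc 2
      | (rw [← hf.neg]; first | exact neg_mem (hc 0) | exact neg_mem (hc 1) | exact neg_mem (hc 2))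
  · rw [span_le, Set.range_subset_iff]
    intro k
    apply subset_span
    fin_cases k <;> exact Set.mem_image2_of_mem (Set.mem_range_self _) (Set.mem_range_self _)

theorem derivedSer_three_eq_bot_of_not_linearIndependent [Module.IsTorsionFree ℤ_[p] L]
    (hf : f.IsAlt) (b : Basis (Fin 3) ℤ_[p] L)
    (hc : ¬ LinearIndependent ℤ_[p] (cyclicBrackets f b)) : derivedSer f 3 = ⊥ := by
  obtain ⟨g, hg, k, hk⟩ := Fintype.not_linearIndependent_iff.1 hc
  set c := cyclicBrackets f b
  have h1 : ∀ u ∈ derivedSer f 1, g k • u ∈ span ℤ_[p] {c (k + 1), c (k + 2)} := by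
    rw [derivedSer_one_eq_span_cyclicBrackets f hf b]
    exact smul_mem_span_pair_of_sum_eq_zero c g hg k
  have h2 : ∀ u ∈ derivedSer f 2, (g k * g k) • u ∈ ℤ_[p] ∙ f (c (k + 1)) (c (k + 2)) :=
    fun u hu => bracketSub_span_pair_le f hf _ _ (smul_mem_bracketSub f h1 h1 hu)
  have h3 : ∀ u ∈ derivedSer f 3, (g k * g k * (g k * g k)) • u = 0 := fun u hu => by
    simpa [bracketSub_span_singleton_eq_bot f hf] using smul_mem_bracketSub f h2 h2 hu
  refine eq_bot_iff.2 fun u hu => (mem_bot _).2 ?_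
  exact (smul_eq_zero.1 (h3 u hu)).resolve_left (by simp [hk])

theorem MatrixOf.cyclicBrackets_eq {b : Basis (Fin 3) ℤ_[p] L} {A : Matrix (Fin 3) (Fin 3) ℤ_[p]}
    (hA : MatrixOf f b A) (j : Fin 3) : cyclicBrackets f b j = ∑ i, A i j • b i := by
  obtain ⟨h0, h1, h2⟩ := hA
  fin_cases j
  exacts [h0, h1, h2]

theorem exists_matrixOf (b : Basis (Fin 3) ℤ_[p] L) : ∃ A, MatrixOf f b A := by
  refine ⟨Matrix.of fun i j => b.repr (cyclicBrackets f b j) i, ?_, ?_, ?_⟩ <;>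
    exact (b.sum_repr _).symm

theorem MatrixOf.linearIndependent_cyclicBrackets_iff {b : Basis (Fin 3) ℤ_[p] L}
    {A : Matrix (Fin 3) (Fin 3) ℤ_[p]} (hA : MatrixOf f b A) :
    LinearIndependent ℤ_[p] (cyclicBrackets f b) ↔ A.det ≠ 0 := by
  have hcomb : ∀ g, ∑ j, g j • cyclicBrackets f b j = b.equivFun.symm (A.mulVec g) := fun g => by
    simp only [hA.cyclicBrackets_eq, Basis.equivFun_symm_apply, Matrix.mulVec, dotProduct,
      Finset.smul_sum, Finset.sum_smul, smul_smul]
    rw [Finset.sum_comm]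
    simp_rw [mul_comm]
  rw [Fintype.linearIndependent_iff, Ne, ← Matrix.exists_mulVec_eq_zero_iff]
  simp only [hcomb, LinearEquiv.map_eq_zero_iff]
  constructor
  · rintro h ⟨g, hg, hAg⟩
    exact hg (funext (h g hAg))
  · intro h g hAg i
    by_contra hgi
    exact h ⟨g, fun hg => hgi (by simp [hg]), hAg⟩

end Bracket

theorem stmt5 (p : ℕ) [Fact p.Prime] {L : Type*} [AddCommGroup L] [Module ℤ_[p] L]
    (f : L →ₗ[ℤ_[p]] L →ₗ[ℤ_[p]] L) (hanti : ∀ z : L, f z z = 0)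
    (b0 : Module.Basis (Fin 3) ℤ_[p] L) :
    List.TFAE [
      Module.finrank ℤ_[p] (derivedSer f 1) = 3,
      ∀ i, Module.finrank ℤ_[p] (derivedSer f i) = 3,
      ∀ i, derivedSer f i ≠ ⊥,
      ∃ (b : Module.Basis (Fin 3) ℤ_[p] L) (A : Matrix (Fin 3) (Fin 3) ℤ_[p]),
        MatrixOf f b A ∧ A.det ≠ 0,
      ∀ (b : Module.Basis (Fin 3) ℤ_[p] L) (A : Matrix (Fin 3) (Fin 3) ℤ_[p]),
        MatrixOf f b A → A.det ≠ 0] := by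
  have : Module.Finite ℤ_[p] L := .of_basis b0
  have : Module.Free ℤ_[p] L := .of_basis b0
  have hdim : finrank ℤ_[p] L = 3 := by simp [finrank_eq_card_basis b0]
  tfae_have 1 → 2 := fun h1 n =>
    hdim ▸ finrank_derivedSer_eq_of_finrank_derivedSer_one_eq f (h1.trans hdim.symm) n
  tfae_have 2 → 1 := fun h => h 1
  tfae_have 2 → 3 := fun h n hbot => by
    have := h n
    rw [hbot, finrank_bot] at this
    omega
  tfae_have 3 → 5 := fun h b A hA hdet =>
    h 3 (derivedSer_three_eq_bot_of_not_linearIndependent f hanti b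
      (mt (hA.linearIndependent_cyclicBrackets_iff f).1 (not_not.2 hdet)))
  tfae_have 5 → 4 := fun h =>
    have ⟨A, hA⟩ := exists_matrixOf f b0
    ⟨b0, A, hA, h b0 A hA⟩
  tfae_have 4 → 1 := fun ⟨b, A, hA, hdet⟩ => by
    rw [derivedSer_one_eq_span_cyclicBrackets f hanti b,
      finrank_span_eq_card ((hA.linearIndependent_cyclicBrackets_iff f).2 hdet)]
    simp
  tfae_finish
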